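/- Let u be an eventually periodic fixed point of a primitive marked morphism φ over a finite alphabet A. If u is palindromic, then A = {0,1} is a binary alphabet and u equals (01)^ω or (10)^ω (the periodic words 010101⋯ and 101010⋯). -/

import Mathlib

/-!
A fixed point of a primitive morphism is recurrent: every prefix of `u` reappears arbitrarily far
out, so the eventual period `p` of `u` is a period of all of `u`. Let `ψ` be a power `φ_L^t` of
the leftmost conjugate, with `t` so large that every `ψ(a)` is longer than `p`; then `u = w ψ(u)`
for some word `w`, and since each block `ψ(a)` covers a whole period and the blocks have pairwise
distinct first letters, each letter of `u` determines the next one. A palindrome longer than `p`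
contains the reversal `ba` of every factor `ab`, so the successor of the successor of a letter is
the letter itself and `u` has period 2. Primitivity puts every letter into `u`, and the first
letters of `φ_L` are not constant, so there are at least two.
-/

namespace ZDC

variable {A : Type*}

/-- The finite word `u_i u_{i+1} ⋯ u_{i+n-1}` occurring at position `i` in `u`. -/
def factorAt (u : ℕ → A) (i n : ℕ) : List A := (List.range n).map (fun j => u (i + j))

/-- `w` occurs at index `i` in the infinite word `u`. -/
def OccursAt (u : ℕ → A) (w : List A) (i : ℕ) : Prop := w = factorAt u i w.length

/-- The language of the infinite word `u`: the set of its factors. -/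
def Lang (u : ℕ → A) : Set (List A) := {w | ∃ i, OccursAt u w i}

/-- The language of `u` is closed under reversal. -/
def ClosedUnderReversal (u : ℕ → A) : Prop := ∀ w ∈ Lang u, w.reverse ∈ Lang u

/-- Number of distinct palindromic factors of a finite word (the empty word counts). -/
noncomputable def palCount (w : List A) : ℕ := {v : List A | v <:+: w ∧ v.reverse = v}.ncard

/-- Palindromic defect of a finite word: `|w| + 1 - p(w)`. -/
noncomputable def wordDefect (w : List A) : ℕ := w.length + 1 - palCount w

/-- Palindromic defect of an infinite word: sup of defects of its factors, in `ℕ∞`. -/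
noncomputable def Defect (u : ℕ → A) : ℕ∞ := ⨆ w ∈ Lang u, (wordDefect w : ℕ∞)

/-- `u` contains infinitely many palindromic factors. -/
def Palindromic (u : ℕ → A) : Prop := ∀ N, ∃ w ∈ Lang u, N ≤ w.length ∧ w.reverse = w

/-- `u` is (purely) periodic: `u = zzz⋯` for a nonempty `z`. -/
def Periodic (u : ℕ → A) : Prop := ∃ p, 0 < p ∧ ∀ n, u (n + p) = u n

/-- `u` is eventually periodic: `u = v zzz⋯`. -/
def EventuallyPeriodic (u : ℕ → A) : Prop := ∃ p, 0 < p ∧ ∃ N, ∀ n ≥ N, u (n + p) = u n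

/-- `r` is a complete return word to `w` in `u`: it stretches from one occurrence of `w`
to the next one (inclusively). -/
def IsCompleteReturn (u : ℕ → A) (w r : List A) : Prop :=
  ∃ i j, i < j ∧ OccursAt u w i ∧ OccursAt u w j ∧
    (∀ k, i < k → k < j → ¬ OccursAt u w k) ∧
    r = factorAt u i (j + w.length - i)

/-- `c` is a complete mirror return to `w` in `u`. -/
def IsCompleteMirrorReturn (u : ℕ → A) (w c : List A) : Prop :=
  c ∈ Lang u ∧
  ¬ w <:+: (c.drop 1).dropLast ∧ ¬ w.reverse <:+: (c.drop 1).dropLast ∧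
  ((w <+: c ∧ w.reverse <:+ c) ∨ (w.reverse <+: c ∧ w <:+ c))

/-- Occurrences of `w` and its reversal alternate in `u`. -/
def Alternate (u : ℕ → A) (w : List A) : Prop :=
  (∀ i j, i < j → OccursAt u w i → OccursAt u w j →
    (∀ k, i < k → k < j → ¬ OccursAt u w k) →
    ∃ k, i ≤ k ∧ k ≤ j ∧ OccursAt u w.reverse k) ∧
  (∀ i j, i < j → OccursAt u w.reverse i → OccursAt u w.reverse j →
    (∀ k, i < k → k < j → ¬ OccursAt u w.reverse k) →
    ∃ k, i ≤ k ∧ k ≤ j ∧ OccursAt u w k)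

/-- Left extensions `E⁻(w)`. -/
def Eminus (u : ℕ → A) (w : List A) : Set A := {a | a :: w ∈ Lang u}

/-- Right extensions `E⁺(w)`. -/
def Eplus (u : ℕ → A) (w : List A) : Set A := {b | w ++ [b] ∈ Lang u}

/-- Bilateral extensions `E(w)`. -/
def Eboth (u : ℕ → A) (w : List A) : Set (A × A) := {p | p.1 :: (w ++ [p.2]) ∈ Lang u}

/-- Symmetric bilateral extensions `E⁼(w)`. -/
def Esym (u : ℕ → A) (w : List A) : Set A := {a | a :: (w ++ [a]) ∈ Lang u}

/-- Bilateral multiplicity `m(w) = #E(w) − #E⁺(w) − #E⁻(w) + 1`. -/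
noncomputable def mult (u : ℕ → A) (w : List A) : ℤ :=
  ((Eboth u w).ncard : ℤ) - (Eplus u w).ncard - (Eminus u w).ncard + 1

/-- `w` is a bispecial factor of `u`. -/
def Bispecial (u : ℕ → A) (w : List A) : Prop :=
  2 ≤ (Eminus u w).ncard ∧ 2 ≤ (Eplus u w).ncard

/-- The bipartite extension graph `Γ(w)` with vertex set `E⁻(w) ⊔ E⁺(w)`. -/
def GammaGraph (u : ℕ → A) (w : List A) : SimpleGraph (↥(Eminus u w) ⊕ ↥(Eplus u w)) :=
  SimpleGraph.fromRel (fun x y =>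
    ∃ (a : ↥(Eminus u w)) (b : ↥(Eplus u w)),
      x = Sum.inl a ∧ y = Sum.inr b ∧ ((a : A), (b : A)) ∈ Eboth u w)

/-- The graph `Θ(w)` on the vertex set `E⁻(w)` for a palindrome `w`. -/
def ThetaGraph (u : ℕ → A) (w : List A) : SimpleGraph (↥(Eminus u w)) :=
  SimpleGraph.fromRel (fun a b => ((a : A), (b : A)) ∈ Eboth u w)

/-- Factor complexity `C(n)`. -/
noncomputable def complexity (u : ℕ → A) (n : ℕ) : ℕ :=
  {w ∈ Lang u | w.length = n}.ncard

/-- Palindromic complexity `P(n)`. -/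
noncomputable def palComplexity (u : ℕ → A) (n : ℕ) : ℕ :=
  {w ∈ Lang u | w.length = n ∧ w.reverse = w}.ncard

/-- Extension of a morphism (given by its letter images) to finite words. -/
def Apply (φ : A → List A) (x : List A) : List A := x.flatMap φ

/-- A morphism is primitive if some power maps each letter to a word containing all letters. -/
def Primitive (φ : A → List A) : Prop :=
  ∃ k, 1 ≤ k ∧ ∀ a b : A, b ∈ (Apply φ)^[k] [a]

/-- `u` is a fixed point of `φ`: the image of every prefix of `u` is again a prefix of `u`. -/
def IsFixedPoint (φ : A → List A) (u : ℕ → A) : Prop :=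
  ∀ n, Apply φ (factorAt u 0 n) = factorAt u 0 (Apply φ (factorAt u 0 n)).length

/-- `ψ ▷ φ`: `ψ` is a left conjugate of `φ` with conjugate word `w`,
i.e. `φ(a)w = wψ(a)` for every letter `a`. -/
def LeftConj (ψ φ : A → List A) (w : List A) : Prop :=
  ∀ a, φ a ++ w = w ++ ψ a

/-- A morphism is cyclic if all images of letters are powers of a common word. -/
def Cyclic (φ : A → List A) : Prop :=
  ∃ w : List A, ∀ a, ∃ k : ℕ, φ a = (List.replicate k w).flatten

/-- First letter (as an `Option`) of the image of a letter. -/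
def Fst (φ : A → List A) : A → Option A := fun a => (φ a).head?

/-- Last letter (as an `Option`) of the image of a letter. -/
def Lst (φ : A → List A) : A → Option A := fun a => (φ a).getLast?

/-- `φL` is the leftmost conjugate of `φ`: a left conjugate whose first-letter map
is not constant. -/
def IsLeftmostConj (φL φ : A → List A) : Prop :=
  (∃ w, LeftConj φL φ w) ∧ ¬ (∀ a b, Fst φL a = Fst φL b)

/-- `φR` is the rightmost conjugate of `φ`: a right conjugate whose last-letter map
is not constant. -/
def IsRightmostConj (φR φ : A → List A) : Prop :=
  (∃ w, LeftConj φ φR w) ∧ ¬ (∀ a b, Lst φR a = Lst φR b)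

/-- A marked morphism: acyclic, and the first-letter map of its leftmost conjugate and
the last-letter map of its rightmost conjugate are injective. -/
def Marked (φ : A → List A) : Prop :=
  ¬ Cyclic φ ∧
  (∃ φL, IsLeftmostConj φL φ ∧ Function.Injective (Fst φL)) ∧
  (∃ φR, IsRightmostConj φR φ ∧ Function.Injective (Lst φR))

end ZDC

namespace ZDC

open Function

variable {A : Type*} {u : ℕ → A}

section Occurrences

lemma length_factorAt (u : ℕ → A) (i n : ℕ) : (factorAt u i n).length = n := by
  simp [factorAt]

lemma factorAt_add (u : ℕ → A) (i m n : ℕ) :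
    factorAt u i (m + n) = factorAt u i m ++ factorAt u (i + m) n := by
  simp [factorAt, List.range_add, Nat.add_assoc]

lemma factorAt_one (u : ℕ → A) (i : ℕ) : factorAt u i 1 = [u i] := by
  simp [factorAt]

lemma occursAt_iff {w : List A} {i : ℕ} :
    OccursAt u w i ↔ ∀ j (hj : j < w.length), u (i + j) = w[j] := by
  constructor
  · intro h j hj
    simp [List.getElem_of_eq h hj, factorAt]
  · intro h
    refine List.ext_getElem (length_factorAt ..).symm fun j h₁ _ => ?_
    simp [factorAt, h j h₁]

lemma occursAt_factorAt_iff {i n m : ℕ} :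
    OccursAt u (factorAt u i n) m ↔ ∀ j < n, u (m + j) = u (i + j) := by
  simp [occursAt_iff, factorAt]

lemma occursAt_append {x y : List A} {i : ℕ} :
    OccursAt u (x ++ y) i ↔ OccursAt u x i ∧ OccursAt u y (i + x.length) := by
  unfold OccursAt
  rw [List.length_append, factorAt_add]
  exact ⟨fun h => List.append_inj h (length_factorAt ..).symm,
    fun ⟨hx, hy⟩ => congrArg₂ _ hx hy⟩

lemma OccursAt.of_prefix {x y : List A} {i : ℕ} (hy : OccursAt u y i) (hxy : x <+: y) :
    OccursAt u x i := by
  obtain ⟨t, rfl⟩ := hxy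
  exact (occursAt_append.1 hy).1

lemma OccursAt.exists_of_infix {x y : List A} {i : ℕ} (hy : OccursAt u y i)
    (hxy : x <:+: y) : ∃ j, i ≤ j ∧ OccursAt u x j := by
  obtain ⟨s, t, rfl⟩ := hxy
  exact ⟨i + s.length, by omega, (occursAt_append.1 (occursAt_append.1 hy).1).2⟩

lemma OccursAt.factorAt_prefix {y : List A} {i n : ℕ} (hy : OccursAt u y i)
    (hn : n ≤ y.length) : factorAt u i n <+: y := by
  obtain ⟨d, hd⟩ := Nat.exists_eq_add_of_le hn
  rw [hy, hd, factorAt_add]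
  exact List.prefix_append ..

lemma OccursAt.head?_eq {x : List A} {i : ℕ} (h : OccursAt u x i) (hx : x ≠ []) :
    x.head? = some (u i) := by
  obtain ⟨c, r, rfl⟩ := List.exists_cons_of_ne_nil hx
  have := occursAt_iff.1 h 0 (by simp)
  simp_all

end Occurrences

section Morphisms

variable {φ ψ : A → List A}

lemma apply_append (φ : A → List A) (x y : List A) :
    Apply φ (x ++ y) = Apply φ x ++ Apply φ y :=
  List.flatMap_append

lemma apply_singleton (φ : A → List A) (a : A) : Apply φ [a] = φ a :=
  List.flatMap_singleton ..

lemma iterate_apply_append (φ : A → List A) (t : ℕ) (x y : List A) :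
    (Apply φ)^[t] (x ++ y) = (Apply φ)^[t] x ++ (Apply φ)^[t] y :=
  (Semiconj₂.iterate (fun x y => apply_append φ x y) t) x y

lemma mul_length_le_length_apply {n : ℕ} (h : ∀ a, n ≤ (φ a).length) (x : List A) :
    n * x.length ≤ (Apply φ x).length := by
  induction x with
  | nil => simp
  | cons a x ih =>
    rw [← List.singleton_append, apply_append, apply_singleton, List.length_append,
      List.length_append, mul_add]
    have := h a
    simp only [List.length_singleton, mul_one]
    omega

lemma length_le_length_apply (hφ : ∀ a, φ a ≠ []) (x : List A) :
    x.length ≤ (Apply φ x).length := by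
  simpa using mul_length_le_length_apply (fun a => List.length_pos_iff.2 (hφ a)) x

def mpow (φ : A → List A) (t : ℕ) (a : A) : List A := (Apply φ)^[t] [a]

lemma apply_mpow (φ : A → List A) (t : ℕ) (x : List A) :
    Apply (mpow φ t) x = (Apply φ)^[t] x := by
  induction x with
  | nil => exact (iterate_fixed rfl t).symm
  | cons a x ih =>
    rw [← List.singleton_append, apply_append, iterate_apply_append, ih, apply_singleton]
    rfl

lemma mpow_add (φ : A → List A) (s t : ℕ) (a : A) :
    mpow φ (s + t) a = Apply (mpow φ s) (mpow φ t a) := by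
  rw [apply_mpow]
  exact iterate_add_apply ..

lemma mpow_succ (φ : A → List A) (t : ℕ) (a : A) :
    mpow φ (t + 1) a = Apply φ (mpow φ t a) :=
  iterate_succ_apply' ..

lemma mpow_ne_nil (hφ : ∀ a, φ a ≠ []) (t : ℕ) (a : A) : mpow φ t a ≠ [] := by
  induction t with
  | zero => simp [mpow]
  | succ t ih =>
    rw [mpow_succ, ← List.length_pos_iff]
    exact (List.length_pos_iff.2 ih).trans_le (length_le_length_apply hφ _)

lemma isFixedPoint_mpow (h : IsFixedPoint φ u) (t : ℕ) : IsFixedPoint (mpow φ t) u := by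
  intro n
  rw [apply_mpow]
  induction t with
  | zero => simp [length_factorAt]
  | succ t ih =>
    rw [iterate_succ_apply', ih]
    exact h _

lemma IsFixedPoint.occursAt_mpow (h : IsFixedPoint φ u) (t : ℕ) :
    OccursAt u (mpow φ t (u 0)) 0 := by
  simpa [OccursAt, factorAt_one, apply_singleton] using isFixedPoint_mpow h t 1

lemma head?_apply (hφ : ∀ a, φ a ≠ []) (x : List A) :
    (Apply φ x).head? = x.head?.bind (Fst φ) := by
  cases x with
  | nil => rfl
  | cons a x =>
    rw [← List.singleton_append, apply_append, apply_singleton,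
      List.head?_append_of_ne_nil _ (hφ a)]
    rfl

lemma injective_Fst_mpow (hφ : ∀ a, φ a ≠ []) (hinj : Injective (Fst φ)) (t : ℕ) :
    Injective (Fst (mpow φ t)) := by
  induction t with
  | zero => exact fun a b h => by simpa [Fst, mpow] using h
  | succ t ih =>
    have hbind : Injective fun o : Option A => o.bind (Fst φ) := by
      have hsome : ∀ a, Fst φ a ≠ none := fun a => by simpa [Fst] using hφ a
      rintro (_ | a) (_ | b) h
      · rfl
      · exact absurd h.symm (hsome b)
      · exact absurd h (hsome a)
      · exact congrArg some (hinj h)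
    have : Fst (mpow φ (t + 1)) = (fun o => o.bind (Fst φ)) ∘ Fst (mpow φ t) := by
      funext a
      simp only [Fst, comp_apply, mpow_succ, head?_apply hφ]
    rw [this]
    exact hbind.comp ih

end Morphisms

section Primitive

variable {φ : A → List A}

lemma Primitive.ne_nil (h : Primitive φ) (a : A) : φ a ≠ [] := by
  obtain ⟨k, hk, hmem⟩ := h
  intro ha
  obtain ⟨k, rfl⟩ := Nat.exists_eq_add_of_le' hk
  have := hmem a a
  rw [iterate_succ_apply, apply_singleton, ha, iterate_fixed rfl] at this
  simp at this

lemma Primitive.surjective (h : Primitive φ) (hfix : IsFixedPoint φ u) : Surjective u := by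
  obtain ⟨k, -, hmem⟩ := h
  intro c
  obtain ⟨j, hj, hc⟩ := List.getElem_of_mem (hmem (u 0) c)
  have := occursAt_iff.1 (hfix.occursAt_mpow k) j hj
  rw [zero_add] at this
  exact ⟨j, this.trans hc⟩

lemma Primitive.exists_le_length_mpow [Nontrivial A] (h : Primitive φ) (n : ℕ) :
    ∃ t, ∀ a, n ≤ (mpow φ t a).length := by
  classical
  obtain ⟨k, -, hmem⟩ := h
  obtain ⟨x, y, hxy⟩ := exists_pair_ne A
  have two : ∀ a, 2 ≤ (mpow φ k a).length := fun a =>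
    (Finset.one_lt_card.2 ⟨x, List.mem_toFinset.2 (hmem a x), y, List.mem_toFinset.2 (hmem a y),
      hxy⟩).trans_le (List.toFinset_card_le _)
  have grow : ∀ j a, 2 ^ j ≤ (mpow φ (k * j) a).length := by
    intro j
    induction j with
    | zero => simp [mpow]
    | succ j ih =>
      intro a
      rw [mul_add_one, mpow_add, pow_succ]
      exact (Nat.mul_le_mul_left _ (two a)).trans (mul_length_le_length_apply ih _)
  exact ⟨k * n, fun a => Nat.lt_two_pow_self.le.trans (grow n a)⟩

end Primitive

section Conjugates

variable {φ ψ : A → List A} {w : List A}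

lemma LeftConj.apply_append_eq (h : LeftConj ψ φ w) (x : List A) :
    Apply φ x ++ w = w ++ Apply ψ x := by
  induction x with
  | nil => simp [Apply]
  | cons a x ih =>
    rw [← List.singleton_append, apply_append, apply_append, apply_singleton, apply_singleton,
      List.append_assoc, ih, ← List.append_assoc, h a, List.append_assoc]

lemma LeftConj.length_apply (h : LeftConj ψ φ w) (x : List A) :
    (Apply φ x).length = (Apply ψ x).length := by
  have := congrArg List.length (h.apply_append_eq x)
  simp only [List.length_append] at this
  omega

lemma LeftConj.length_eq (h : LeftConj ψ φ w) (a : A) : (φ a).length = (ψ a).length := by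
  simpa only [apply_singleton] using h.length_apply [a]

lemma LeftConj.ne_nil (h : LeftConj ψ φ w) (hφ : ∀ a, φ a ≠ []) (a : A) : ψ a ≠ [] := by
  rw [← List.length_pos_iff, ← h.length_eq]
  exact List.length_pos_iff.2 (hφ a)

lemma LeftConj.mpow (h : LeftConj ψ φ w) (t : ℕ) : ∃ w', LeftConj (mpow ψ t) (mpow φ t) w' := by
  suffices ∃ w', ∀ x, (Apply φ)^[t] x ++ w' = w' ++ (Apply ψ)^[t] x from
    this.imp fun w' hw' a => hw' [a]
  induction t with
  | zero => exact ⟨[], by simp⟩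
  | succ t ih =>
    obtain ⟨w', hw'⟩ := ih
    refine ⟨Apply φ w' ++ w, fun x => ?_⟩
    rw [iterate_succ_apply', iterate_succ_apply', ← List.append_assoc, ← apply_append, hw',
      apply_append, List.append_assoc, h.apply_append_eq, List.append_assoc]

/-- Applying `φ(x) w = w ψ(x)` to the prefixes of the fixed point `u = φ(u)` shows
`u = w ψ(u)`. -/
lemma LeftConj.occursAt_prefix (h : LeftConj ψ φ w) (hfix : IsFixedPoint φ u)
    (hψ : ∀ a, ψ a ≠ []) (n : ℕ) : OccursAt u (w ++ Apply ψ (factorAt u 0 n)) 0 := by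
  have hsplit : factorAt u 0 (n + w.length) = factorAt u 0 n ++ factorAt u n w.length := by
    simpa using factorAt_add u 0 n w.length
  have hlen : w.length ≤ (Apply ψ (factorAt u n w.length)).length := by
    simpa [length_factorAt] using length_le_length_apply hψ (factorAt u n w.length)
  refine OccursAt.of_prefix (hfix (n + w.length)) (List.prefix_of_prefix_length_le (l₃ :=
    Apply φ (factorAt u 0 (n + w.length)) ++ w) ?_ (List.prefix_append ..) ?_)
  · rw [h.apply_append_eq, hsplit, apply_append, ← List.append_assoc]
    exact List.prefix_append ..
  · rw [h.length_apply, hsplit, apply_append]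
    simp only [List.length_append]
    omega

lemma LeftConj.occursAt_apply_factorAt (h : LeftConj ψ φ w) (hfix : IsFixedPoint φ u)
    (hψ : ∀ a, ψ a ≠ []) (i n : ℕ) :
    OccursAt u (Apply ψ (factorAt u i n)) (w.length + (Apply ψ (factorAt u 0 i)).length) := by
  have := h.occursAt_prefix hfix hψ (i + n)
  rw [factorAt_add, apply_append, ← List.append_assoc] at this
  simpa using (occursAt_append.1 this).2

end Conjugates

lemma Primitive.exists_ge_occursAt_prefix [Nontrivial A] {φ : A → List A} (hprim : Primitive φ)
    (hfix : IsFixedPoint φ u) (n M : ℕ) : ∃ m, M ≤ m ∧ OccursAt u (factorAt u 0 n) m := by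
  obtain ⟨t, ht⟩ := hprim.exists_le_length_mpow n
  have hne := mpow_ne_nil hprim.ne_nil
  obtain ⟨k, -, hmem⟩ := hprim
  have hprefix : factorAt u 0 n <+: mpow φ t (u 0) :=
    (hfix.occursAt_mpow t).factorAt_prefix (ht _)
  have hinfix : mpow φ t (u 0) <:+: mpow φ (t + k) (u M) := by
    rw [mpow_add]
    exact List.infix_flatMap_of_mem (hmem (u M) (u 0)) _
  have hblock := (show LeftConj (mpow φ (t + k)) (mpow φ (t + k)) [] by simp [LeftConj])
    |>.occursAt_apply_factorAt (isFixedPoint_mpow hfix (t + k)) (hne (t + k)) M 1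
  rw [factorAt_one, apply_singleton] at hblock
  obtain ⟨m, hm, hocc⟩ := hblock.exists_of_infix (hprefix.isInfix.trans hinfix)
  refine ⟨m, le_trans ?_ hm, hocc⟩
  simpa [length_factorAt] using length_le_length_apply (hne (t + k)) (factorAt u 0 M)

lemma periodic_of_recurrent {p N : ℕ} (hN : ∀ n ≥ N, u (n + p) = u n)
    (hrec : ∀ n M, ∃ m, M ≤ m ∧ OccursAt u (factorAt u 0 n) m) : Function.Periodic u p := by
  intro n
  obtain ⟨m, hm, hocc⟩ := hrec (n + p + 1) N
  have hagree := occursAt_factorAt_iff.1 hocc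
  calc u (n + p) = u (m + n + p) := by rw [add_assoc, hagree _ (by omega), zero_add]
    _ = u (m + n) := hN _ (by omega)
    _ = u n := by rw [hagree _ (by omega), zero_add]

/-- A long palindromic factor of a `p`-periodic word covers every residue mod `p`, so the
reversal of every factor of length two occurs. -/
lemma Palindromic.exists_reversed_pair {p : ℕ} (hpal : Palindromic u) (hper : Function.Periodic u p)
    (hp : 0 < p) (n : ℕ) : ∃ m, u m = u (n + 1) ∧ u (m + 1) = u n := by
  obtain ⟨P, ⟨q, hocc⟩, hlen, hrev⟩ := hpal (p + 1)
  have hP := occursAt_iff.1 hocc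
  have hmirror : ∀ j (hj : j < P.length), P[j] = P[P.length - 1 - j] := fun j hj => by
    rw [← List.getElem_reverse (by simpa using hj)]
    exact (List.getElem_of_eq hrev _).symm
  set r := (n + p * q - q) % p
  have hr : r < p := Nat.mod_lt _ hp
  have hqr : (q + r) % p = n % p := by
    have : q ≤ p * q := Nat.le_mul_of_pos_left q hp
    rw [Nat.add_mod_mod, show q + (n + p * q - q) = n + p * q by omega, Nat.add_mul_mod_self_left]
  have hnr : u n = u (q + r) := by rw [← hper.map_mod_nat n, ← hqr, hper.map_mod_nat]
  have hnr' : u (n + 1) = u (q + (r + 1)) := by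
    rw [← hper.map_mod_nat (n + 1), Nat.add_mod, ← hqr, ← Nat.add_mod, hper.map_mod_nat, add_assoc]
  refine ⟨q + (P.length - 2 - r), ?_, ?_⟩
  · rw [hnr', hP _ (by omega), hP _ (by omega), hmirror _ (by omega)]
    congr 1
    omega
  · rw [hnr, add_assoc, hP _ (by omega), hP _ (by omega), hmirror _ (by omega)]
    congr 1
    omega

lemma eq_of_agree_on_period {p q q' : ℕ} (hper : Function.Periodic u p) (hp : 0 < p)
    (h : ∀ j < p, u (q + j) = u (q' + j)) (j : ℕ) : u (q + j) = u (q' + j) := by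
  have hmod : ∀ x, u (x + j) = u (x + j % p) := fun x => by
    conv_lhs => rw [← Nat.mod_add_div j p, ← add_assoc, mul_comm]
    simpa using hper.nat_mul (j / p) (x + j % p)
  rw [hmod, hmod, h _ (Nat.mod_lt _ hp)]

/-- In `u = w ψ(u)` the letter `u (n + 1)` is the first letter of the block `ψ (u (n + 1))`,
which follows the block `ψ (u n)`; when the blocks are at least a period long, the block
`ψ (u n)` determines everything after it. -/
lemma LeftConj.succ_eq_of_eq {φ ψ : A → List A} {w : List A} {p : ℕ} (hconj : LeftConj ψ φ w)
    (hfix : IsFixedPoint φ u) (hper : Function.Periodic u p) (hp : 0 < p)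
    (hlen : ∀ a, p ≤ (ψ a).length) (hinj : Injective (Fst ψ)) {n n' : ℕ} (h : u n = u n') :
    u (n + 1) = u (n' + 1) := by
  have hψ : ∀ a, ψ a ≠ [] := fun a => List.length_pos_iff.1 (hp.trans_le (hlen a))
  have hblocks : ∀ i, OccursAt u (ψ (u i) ++ ψ (u (i + 1)))
      (w.length + (Apply ψ (factorAt u 0 i)).length) := fun i => by
    have e : Apply ψ (factorAt u i 2) = ψ (u i) ++ ψ (u (i + 1)) := by
      simp [factorAt, Apply, List.range_succ]
    simpa [e] using hconj.occursAt_apply_factorAt hfix hψ i 2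
  set q := w.length + (Apply ψ (factorAt u 0 n)).length
  set q' := w.length + (Apply ψ (factorAt u 0 n')).length
  have hagree : ∀ j < p, u (q + j) = u (q' + j) := fun j hj => by
    rw [occursAt_iff.1 (occursAt_append.1 (hblocks n)).1 j (by grind),
      occursAt_iff.1 (occursAt_append.1 (hblocks n')).1 j (by grind)]
    simp [h]
  apply hinj
  unfold Fst
  rw [(occursAt_append.1 (hblocks n)).2.head?_eq (hψ _),
    (occursAt_append.1 (hblocks n')).2.head?_eq (hψ _), ← h,
    eq_of_agree_on_period hper hp hagree]

lemma Primitive.succ_eq_of_eq [Nontrivial A] {φ φL : A → List A} {w : List A} {p : ℕ}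
    (hprim : Primitive φ) (hconj : LeftConj φL φ w) (hinj : Injective (Fst φL))
    (hfix : IsFixedPoint φ u) (hper : Function.Periodic u p) (hp : 0 < p) {n n' : ℕ}
    (h : u n = u n') : u (n + 1) = u (n' + 1) := by
  obtain ⟨t, ht⟩ := hprim.exists_le_length_mpow p
  obtain ⟨w', hw'⟩ := hconj.mpow t
  exact hw'.succ_eq_of_eq (isFixedPoint_mpow hfix t) hper hp (fun a => (hw'.length_eq a) ▸ ht a)
    (injective_Fst_mpow (hconj.ne_nil hprim.ne_nil) hinj t) h

lemma periodic_two_of_succ_eq (hsucc : ∀ n n', u n = u n' → u (n + 1) = u (n' + 1))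
    (hrev : ∀ n, ∃ m, u m = u (n + 1) ∧ u (m + 1) = u n) : Function.Periodic u 2 := fun n => by
  obtain ⟨m, hm, hm1⟩ := hrev n
  rw [← hm1]
  exact hsucc (n + 1) m hm.symm

lemma exists_alternating_of_periodic_two [Nontrivial A] (h2 : Function.Periodic u 2)
    (hsurj : Surjective u) :
    ∃ a b : A, a ≠ b ∧ (∀ c, c = a ∨ c = b) ∧ ∀ n, u n = if n % 2 = 0 then a else b := by
  have hmod : ∀ n, u n = if n % 2 = 0 then u 0 else u 1 := fun n => by
    rw [← h2.map_mod_nat n]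
    rcases Nat.mod_two_eq_zero_or_one n with h | h <;> simp [h]
  have hcover : ∀ c, c = u 0 ∨ c = u 1 := fun c => by
    obtain ⟨i, rfl⟩ := hsurj c
    rw [hmod i]
    split_ifs <;> simp
  refine ⟨u 0, u 1, fun h01 => ?_, hcover, hmod⟩
  obtain ⟨x, y, hxy⟩ := exists_pair_ne A
  have hconst : ∀ c, c = u 0 := fun c => (hcover c).elim id (·.trans h01.symm)
  exact hxy ((hconst x).trans (hconst y).symm)

end ZDC

open ZDC in
theorem stmt_19_general {A : Type*} (φ : A → List A) (u : ℕ → A)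
    (hprim : Primitive φ) (hmarked : Marked φ) (hfix : IsFixedPoint φ u)
    (hep : EventuallyPeriodic u) (hpal : Palindromic u) :
    ∃ a b : A, a ≠ b ∧ (∀ c : A, c = a ∨ c = b) ∧
      ((∀ n, u n = if n % 2 = 0 then a else b) ∨
       (∀ n, u n = if n % 2 = 0 then b else a)) := by
  obtain ⟨-, ⟨φL, ⟨⟨w, hconj⟩, hnonconst⟩, hinj⟩, -⟩ := hmarked
  have : Nontrivial A := by
    simp only [not_forall] at hnonconst
    obtain ⟨a, b, hab⟩ := hnonconst
    exact ⟨a, b, fun h => hab (h ▸ rfl)⟩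
  obtain ⟨p, hp, N, hN⟩ := hep
  have hper := periodic_of_recurrent hN (hprim.exists_ge_occursAt_prefix hfix)
  have h2 : Function.Periodic u 2 := periodic_two_of_succ_eq
    (fun _ _ => hprim.succ_eq_of_eq hconj hinj hfix hper hp) (hpal.exists_reversed_pair hper hp)
  obtain ⟨a, b, hab, hcover, hu⟩ := exists_alternating_of_periodic_two h2 (hprim.surjective hfix)
  exact ⟨a, b, hab, hcover, Or.inl hu⟩

open ZDC in
/-- Let `u` be an eventually periodic fixed point of a primitive marked
morphism `φ` over `A`. If `u` is palindromic, then `A` is a binary alphabet `{a,b}` and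
`u = (ab)^ω` or `u = (ba)^ω`. -/
theorem stmt_19 {A : Type*} [Fintype A] (φ : A → List A) (u : ℕ → A)
    (hprim : Primitive φ) (hmarked : Marked φ) (hfix : IsFixedPoint φ u)
    (hep : EventuallyPeriodic u) (hpal : Palindromic u) :
    ∃ a b : A, a ≠ b ∧ (∀ c : A, c = a ∨ c = b) ∧
      ((∀ n, u n = if n % 2 = 0 then a else b) ∨
       (∀ n, u n = if n % 2 = 0 then b else a)) :=
  stmt_19_general φ u hprim hmarked hfix hep hpal
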